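/- arXiv:0901.4760 — 4 statements merged into one kernel-verified Lean document; each statement's English description precedes it below -/
import Mathlib

section
/- For any monotone f: {0,1}^n → {-1,1}, the total influence satisfies I(f) = Σ_{i=1}^n I_i(f) ≤ √n. -/
open Finset

noncomputable def expect {n : ℕ} (f : (Fin n → Bool) → ℝ) : ℝ :=
  (∑ ω : Fin n → Bool, f ω) / 2 ^ n

noncomputable def walsh {n : ℕ} (S : Finset (Fin n)) (ω : Fin n → Bool) : ℝ :=
  ∏ i ∈ S, (if ω i then -1 else 1)

noncomputable def walshCoeff {n : ℕ} (f : (Fin n → Bool) → ℝ) (S : Finset (Fin n)) : ℝ :=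
  expect (fun ω => f ω * walsh S ω)

noncomputable def noiseKernel {n : ℕ} (ε : ℝ) (ω ω' : Fin n → Bool) : ℝ :=
  ∏ i, (if ω i = ω' i then 1 - ε / 2 else ε / 2)

noncomputable def noiseE {n : ℕ} (ε : ℝ) (f g : (Fin n → Bool) → ℝ) : ℝ :=
  (∑ ω : Fin n → Bool, ∑ ω' : Fin n → Bool, noiseKernel ε ω ω' * f ω * g ω') / 2 ^ n

noncomputable def noiseP {n : ℕ} (ε : ℝ) (f : (Fin n → Bool) → ℝ) : ℝ :=
  (∑ ω : Fin n → Bool, ∑ ω' : Fin n → Bool,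
    noiseKernel ε ω ω' * (if f ω = f ω' then 0 else 1)) / 2 ^ n

noncomputable def influence {n : ℕ} (f : (Fin n → Bool) → ℝ) (i : Fin n) : ℝ :=
  expect (fun ω => if f ω = f (Function.update ω i (!ω i)) then 0 else 1)

noncomputable def totalInfluence {n : ℕ} (f : (Fin n → Bool) → ℝ) : ℝ :=
  ∑ i, influence f i

/-!
Pairing each `ω` with `ω` flipped at coordinate `i`, monotonicity of `f` fixes the sign of
`f (flip ω) - f ω` against the Walsh character of `{i}`, so `f̂({i}) = -½ 𝔼 |f (flip ω) - f ω|`,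
which is `-I_i(f)` when `f` is `±1`-valued. Parseval bounds `∑ i, f̂({i})²` by `𝔼 f² = 1`, and
Cauchy–Schwarz turns this into `∑ i, I_i(f) ≤ √n`.
-/

section

variable {n : ℕ}

def flipAt (i : Fin n) (ω : Fin n → Bool) : Fin n → Bool :=
  Function.update ω i (!ω i)

theorem flipAt_involutive (i : Fin n) : Function.Involutive (flipAt i) := by
  intro ω
  simp [flipAt]

theorem le_flipAt {i : Fin n} {ω : Fin n → Bool} (h : ω i = false) :
    ω ≤ flipAt i ω := by
  intro j
  rcases eq_or_ne j i with rfl | hj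
  · simp [flipAt, h]
  · simp [flipAt, Function.update_of_ne hj]

theorem expect_const (c : ℝ) : expect (fun _ : Fin n → Bool => c) = c := by
  simp [_root_.expect]

theorem walsh_singleton (i : Fin n) (ω : Fin n → Bool) :
    walsh {i} ω = if ω i then -1 else 1 := by
  simp [walsh]

theorem walsh_singleton_flipAt (i : Fin n) (ω : Fin n → Bool) :
    walsh {i} (flipAt i ω) = -walsh {i} ω := by
  cases h : ω i <;> simp [walsh_singleton, flipAt, h]

theorem sum_walsh_mul_walsh (ω ω' : Fin n → Bool) :
    ∑ S : Finset (Fin n), walsh S ω * walsh S ω' = if ω = ω' then (2 : ℝ) ^ n else 0 := by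
  calc ∑ S, walsh S ω * walsh S ω'
      = ∏ i, (1 + (if ω i then -1 else 1) * (if ω' i then -1 else 1)) := by
        rw [Finset.prod_one_add, Finset.powerset_univ]
        simp only [walsh, Finset.prod_mul_distrib]
    _ = ∏ i, if ω i = ω' i then (2 : ℝ) else 0 := by
        refine Finset.prod_congr rfl fun i _ => ?_
        cases ω i <;> cases ω' i <;> norm_num
    _ = if ω = ω' then 2 ^ n else 0 := by
        simp [Finset.prod_ite_zero, funext_iff]

theorem sum_walshCoeff_sq (f : (Fin n → Bool) → ℝ) :
    ∑ S : Finset (Fin n), walshCoeff f S ^ 2 = expect (fun ω => f ω ^ 2) := by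
  have key : ∑ S : Finset (Fin n), (∑ ω, f ω * walsh S ω) ^ 2 = 2 ^ n * ∑ ω, f ω ^ 2 :=
    calc ∑ S : Finset (Fin n), (∑ ω, f ω * walsh S ω) ^ 2
        = ∑ ω, ∑ ω', f ω * f ω' * ∑ S : Finset (Fin n), walsh S ω * walsh S ω' := by
          simp only [sq, Finset.sum_mul_sum]
          simp only [Finset.mul_sum]
          rw [Finset.sum_comm]
          refine Finset.sum_congr rfl fun ω _ => ?_
          rw [Finset.sum_comm]
          refine Finset.sum_congr rfl fun ω' _ => Finset.sum_congr rfl fun S _ => ?_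
          ring
      _ = 2 ^ n * ∑ ω, f ω ^ 2 := by
          simp [sum_walsh_mul_walsh, Finset.mul_sum, sq, mul_comm]
  simp only [walshCoeff, _root_.expect, div_pow, ← Finset.sum_div, key]
  field_simp

theorem sum_walshCoeff_singleton_sq_le (f : (Fin n → Bool) → ℝ) :
    ∑ i, walshCoeff f {i} ^ 2 ≤ expect (fun ω => f ω ^ 2) := by
  rw [← sum_walshCoeff_sq, ← Finset.sum_image (f := fun S => walshCoeff f S ^ 2)
    (s := Finset.univ) (g := fun i => {i}) fun _ _ _ _ h => Finset.singleton_injective h]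
  exact Finset.sum_le_sum_of_subset_of_nonneg (Finset.subset_univ _) fun _ _ _ => sq_nonneg _

theorem monotone_walsh_singleton_add_flipAt {f : (Fin n → Bool) → ℝ} (hf : Monotone f)
    (i : Fin n) (ω : Fin n → Bool) :
    f ω * walsh {i} ω + f (flipAt i ω) * walsh {i} (flipAt i ω) = -|f (flipAt i ω) - f ω| := by
  rw [walsh_singleton_flipAt, walsh_singleton]
  cases h : ω i
  · have hle : f ω ≤ f (flipAt i ω) := hf (le_flipAt h)
    rw [abs_of_nonneg (sub_nonneg.2 hle), if_neg Bool.false_ne_true]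
    ring
  · have hle : f (flipAt i ω) ≤ f ω := by
      have h' : flipAt i ω i = false := by simp [flipAt, h]
      simpa [flipAt_involutive i ω] using hf (le_flipAt h')
    rw [abs_of_nonpos (sub_nonpos.2 hle), if_pos rfl]
    ring

theorem walshCoeff_singleton_of_monotone {f : (Fin n → Bool) → ℝ} (hf : Monotone f)
    (i : Fin n) :
    walshCoeff f {i} = -expect (fun ω => |f (flipAt i ω) - f ω|) / 2 := by
  have hflip : ∑ ω, f (flipAt i ω) * walsh {i} (flipAt i ω) = ∑ ω, f ω * walsh {i} ω :=
    (flipAt_involutive i).bijective.sum_comp fun ω => f ω * walsh {i} ω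
  have hpair := Finset.sum_congr rfl fun ω (_ : ω ∈ Finset.univ) =>
    monotone_walsh_singleton_add_flipAt hf i ω
  rw [Finset.sum_add_distrib, hflip, Finset.sum_neg_distrib] at hpair
  simp only [walshCoeff, _root_.expect]
  field_simp
  linarith

theorem abs_sub_eq_two_mul_ite {a b : ℝ} (ha : a = 1 ∨ a = -1) (hb : b = 1 ∨ b = -1) :
    |b - a| = 2 * if a = b then 0 else 1 := by
  rcases ha with rfl | rfl <;> rcases hb with rfl | rfl <;> norm_num

theorem influence_eq_expect_abs_sub {f : (Fin n → Bool) → ℝ}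
    (hb : ∀ ω, f ω = 1 ∨ f ω = -1) (i : Fin n) :
    influence f i = expect (fun ω => |f (flipAt i ω) - f ω|) / 2 := by
  unfold flipAt
  simp only [influence, _root_.expect, abs_sub_eq_two_mul_ite (hb _) (hb _), ← Finset.mul_sum]
  ring

theorem influence_eq_neg_walshCoeff_singleton {f : (Fin n → Bool) → ℝ}
    (hb : ∀ ω, f ω = 1 ∨ f ω = -1) (hf : Monotone f) (i : Fin n) :
    influence f i = -walshCoeff f {i} := by
  rw [influence_eq_expect_abs_sub hb, walshCoeff_singleton_of_monotone hf]
  ring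

end

/-- For a monotone Boolean function on {0,1}^n, the total influence is
at most √n. -/
theorem monotone_total_influence_le_sqrt {n : ℕ} (f : (Fin n → Bool) → ℝ)
    (hb : ∀ ω, f ω = 1 ∨ f ω = -1) (hmono : Monotone f) :
    totalInfluence f ≤ Real.sqrt n := by
  have hsq : expect (fun ω => f ω ^ 2) = 1 := by
    have hf2 : (fun ω => f ω ^ 2) = fun _ => 1 :=
      funext fun ω => by rcases hb ω with h | h <;> simp [h]
    rw [hf2, expect_const]
  have hbessel : ∑ i, walshCoeff f {i} ^ 2 ≤ 1 := hsq ▸ sum_walshCoeff_singleton_sq_le f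
  have hcs : (∑ i, walshCoeff f {i}) ^ 2 ≤ n := by
    calc (∑ i, walshCoeff f {i}) ^ 2 ≤ n * ∑ i, walshCoeff f {i} ^ 2 := by
          simpa using sq_sum_le_card_mul_sum_sq (s := Finset.univ) (f := fun i => walshCoeff f {i})
      _ ≤ n := mul_le_of_le_one_right (Nat.cast_nonneg n) hbessel
  calc totalInfluence f = -∑ i, walshCoeff f {i} := by
        simp [totalInfluence, influence_eq_neg_walshCoeff_singleton hb hmono]
    _ ≤ |∑ i, walshCoeff f {i}| := neg_le_abs _
    _ ≤ √n := Real.abs_le_sqrt hcs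
end

section
/- Let f: {0,1}^n → {-1,1} with total influence I(f), and let ε ∈ [0,1]. Then E[f(ω)f(ω_ε)] ≥ (1-ε)^{I(f)}. -/
/-!
Expand `f` in the Walsh basis, `f̂ = walshCoeff f`. Each Walsh function `walsh S` is an
eigenfunction of the noise kernel with eigenvalue `(1 - ε) ^ #S`, so the noise correlation is
`∑ S, f̂(S)² (1 - ε) ^ #S`, while Parseval and `f = ±1` make `S ↦ f̂(S)²` a probability
distribution (the spectral sample), under which `#S` has mean `I(f)`. Jensen's inequality for the
convex map `x ↦ (1 - ε) ^ x`, here in the form of weighted AM–GM, concludes.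
-/

open Finset

theorem Real.rpow_sum_mul_le_sum_mul_rpow {ι : Type*} (s : Finset ι) {c : ℝ} (hc : 0 ≤ c)
    {w x : ι → ℝ} (hw : ∀ i ∈ s, 0 ≤ w i) (hw1 : ∑ i ∈ s, w i = 1) (hx : ∀ i ∈ s, 0 ≤ x i) :
    c ^ (∑ i ∈ s, w i * x i) ≤ ∑ i ∈ s, w i * c ^ x i :=
  calc c ^ (∑ i ∈ s, w i * x i) = ∏ i ∈ s, (c ^ x i) ^ w i := by
        rw [Real.rpow_sum_of_nonneg hc fun i hi => mul_nonneg (hw i hi) (hx i hi)]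
        exact prod_congr rfl fun i _ => by rw [mul_comm, Real.rpow_mul hc]
    _ ≤ ∑ i ∈ s, w i * c ^ x i :=
        Real.geom_mean_le_arith_mean_weighted s w _ hw hw1 fun i _ => Real.rpow_nonneg hc _

open scoped symmDiff

namespace BooleanCube

variable {n : ℕ}

theorem sum_prod_apply (g : Fin n → Bool → ℝ) :
    ∑ ω : Fin n → Bool, ∏ i, g i (ω i) = ∏ i, (g i false + g i true) := by
  rw [← Fintype.prod_sum]
  exact prod_congr rfl fun i _ => by rw [Fintype.sum_bool, add_comm]

theorem walsh_eq_prod_univ (S : Finset (Fin n)) (ω : Fin n → Bool) :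
    walsh S ω = ∏ i, if i ∈ S then (if ω i then -1 else 1) else 1 := by
  rw [walsh, prod_ite_mem, univ_inter]

theorem sum_walsh (S : Finset (Fin n)) :
    ∑ ω : Fin n → Bool, walsh S ω = if S = ∅ then 2 ^ n else 0 := by
  simp_rw [walsh_eq_prod_univ]
  rw [sum_prod_apply fun i b => if i ∈ S then (if b then -1 else 1) else 1]
  by_cases hS : S = ∅
  · simp [hS, one_add_one_eq_two]
  · obtain ⟨i, hi⟩ := nonempty_iff_ne_empty.2 hS
    rw [if_neg hS]
    exact prod_eq_zero (mem_univ i) (by simp [hi])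

theorem walsh_mul_walsh (S T : Finset (Fin n)) (ω : Fin n → Bool) :
    walsh S ω * walsh T ω = walsh (S ∆ T) ω := by
  simp only [walsh_eq_prod_univ, ← prod_mul_distrib]
  refine prod_congr rfl fun i _ => ?_
  by_cases hS : i ∈ S <;> by_cases hT : i ∈ T <;> cases ω i <;> simp [hS, hT, mem_symmDiff]

theorem sum_walsh_mul_walsh (S T : Finset (Fin n)) :
    ∑ ω : Fin n → Bool, walsh S ω * walsh T ω = if S = T then 2 ^ n else 0 := by
  simp_rw [walsh_mul_walsh, sum_walsh]
  congr 1
  exact propext symmDiff_eq_bot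

theorem sum_walsh_mul_walsh_apply (ω ω' : Fin n → Bool) :
    ∑ S : Finset (Fin n), walsh S ω * walsh S ω' = if ω = ω' then 2 ^ n else 0 := by
  simp only [walsh, ← prod_mul_distrib]
  rw [← powerset_univ, ← prod_add_one]
  by_cases h : ω = ω'
  · subst h
    rw [if_pos rfl, prod_congr rfl (g := fun _ => 2) fun i _ => by cases ω i <;> norm_num]
    simp
  · obtain ⟨i, hi⟩ := Function.ne_iff.1 h
    rw [if_neg h]
    refine prod_eq_zero (mem_univ i) ?_
    cases hω : ω i <;> cases hω' : ω' i <;> simp_all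

theorem sum_mul_walsh_eq_two_pow_mul_walshCoeff (f : (Fin n → Bool) → ℝ) (S : Finset (Fin n)) :
    ∑ ω, f ω * walsh S ω = 2 ^ n * walshCoeff f S := by
  rw [walshCoeff, _root_.expect, mul_div_cancel₀ _ (by positivity)]

theorem sum_walshCoeff_mul_walsh (f : (Fin n → Bool) → ℝ) (ω : Fin n → Bool) :
    ∑ S, walshCoeff f S * walsh S ω = f ω := by
  simp only [walshCoeff, _root_.expect, div_mul_eq_mul_div, sum_mul, ← sum_div]
  rw [sum_comm]
  simp only [mul_assoc, ← mul_sum, sum_walsh_mul_walsh_apply, mul_ite, mul_zero,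
    sum_ite_eq', mem_univ, if_true]
  exact mul_div_cancel_right₀ _ (by positivity)

theorem sum_sq_sum_mul_walsh (c : Finset (Fin n) → ℝ) :
    ∑ ω : Fin n → Bool, (∑ S, c S * walsh S ω) ^ 2 = 2 ^ n * ∑ S, c S ^ 2 := by
  calc ∑ ω : Fin n → Bool, (∑ S, c S * walsh S ω) ^ 2
      = ∑ S, ∑ T, c S * c T * ∑ ω : Fin n → Bool, walsh S ω * walsh T ω := by
        simp only [sq, sum_mul_sum]
        rw [sum_comm]
        refine sum_congr rfl fun S _ => ?_
        rw [sum_comm]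
        refine sum_congr rfl fun T _ => ?_
        rw [mul_sum]
        exact sum_congr rfl fun ω _ => mul_mul_mul_comm _ _ _ _
    _ = 2 ^ n * ∑ S, c S ^ 2 := by
        simp only [sum_walsh_mul_walsh, mul_ite, mul_zero, sum_ite_eq, mem_univ, if_true,
          mul_sum, sq, mul_comm]

theorem sum_sq_walshCoeff_of_sign {f : (Fin n → Bool) → ℝ} (hf : ∀ ω, f ω = 1 ∨ f ω = -1) :
    ∑ S, walshCoeff f S ^ 2 = 1 := by
  have h := sum_sq_sum_mul_walsh (walshCoeff f)
  simp only [sum_walshCoeff_mul_walsh] at h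
  have hf2 : ∀ ω, f ω ^ 2 = 1 := fun ω => by rcases hf ω with h | h <;> simp [h]
  simp only [hf2, sum_const, card_univ, Fintype.card_fun, Fintype.card_bool, Fintype.card_fin,
    nsmul_eq_mul, mul_one, Nat.cast_pow, Nat.cast_ofNat] at h
  exact (mul_eq_left₀ (by positivity)).1 h.symm

theorem walsh_update_not (S : Finset (Fin n)) (ω : Fin n → Bool) (i : Fin n) :
    walsh S (Function.update ω i (!ω i)) = (if i ∈ S then -1 else 1) * walsh S ω := by
  have h_off : ∀ j ∈ S.erase i,
      (if Function.update ω i (!ω i) j then (-1 : ℝ) else 1) = if ω j then -1 else 1 :=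
    fun j hj => by rw [Function.update_of_ne (ne_of_mem_erase hj)]
  by_cases hi : i ∈ S
  · rw [if_pos hi, walsh, walsh, ← mul_prod_erase _ _ hi, ← mul_prod_erase _ _ hi,
      prod_congr rfl h_off, Function.update_self]
    cases ω i <;> simp
  · rw [if_neg hi, one_mul, walsh, walsh, ← erase_eq_of_notMem hi]
    exact prod_congr rfl h_off

theorem influence_eq_sum_sq_walshCoeff {f : (Fin n → Bool) → ℝ} (hf : ∀ ω, f ω = 1 ∨ f ω = -1)
    (i : Fin n) : influence f i = ∑ S with i ∈ S, walshCoeff f S ^ 2 := by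
  have h_indicator : ∀ ω : Fin n → Bool,
      (if f ω = f (Function.update ω i (!ω i)) then 0 else 1)
        = ((f ω - f (Function.update ω i (!ω i))) / 2) ^ 2 := fun ω => by
    rcases hf ω with h | h <;> rcases hf (Function.update ω i (!ω i)) with h' | h' <;>
      norm_num [h, h']
  have h_derivative : ∀ ω : Fin n → Bool, (f ω - f (Function.update ω i (!ω i))) / 2
      = ∑ S, (if i ∈ S then walshCoeff f S else 0) * walsh S ω := fun ω => by
    conv_lhs => rw [← sum_walshCoeff_mul_walsh f ω,
      ← sum_walshCoeff_mul_walsh f (Function.update ω i (!ω i))]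
    rw [← sum_sub_distrib, sum_div]
    refine sum_congr rfl fun S _ => ?_
    rw [walsh_update_not]
    split_ifs <;> ring
  simp only [influence, _root_.expect, h_indicator, h_derivative, sum_sq_sum_mul_walsh,
    ite_pow, sum_filter]
  rw [mul_div_cancel_left₀ _ (by positivity)]
  simp

theorem totalInfluence_eq_sum_sq_walshCoeff_mul_card {f : (Fin n → Bool) → ℝ}
    (hf : ∀ ω, f ω = 1 ∨ f ω = -1) :
    totalInfluence f = ∑ S, walshCoeff f S ^ 2 * #S := by
  simp only [totalInfluence, influence_eq_sum_sq_walshCoeff hf, sum_filter]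
  rw [sum_comm]
  simp only [sum_ite_mem, univ_inter, sum_const, nsmul_eq_mul, mul_comm]

theorem sum_noiseKernel_mul_walsh (ε : ℝ) (T : Finset (Fin n)) (ω : Fin n → Bool) :
    ∑ ω', noiseKernel ε ω ω' * walsh T ω' = (1 - ε) ^ #T * walsh T ω := by
  simp only [noiseKernel, walsh_eq_prod_univ, ← prod_mul_distrib]
  rw [sum_prod_apply fun i b => (if ω i = b then 1 - ε / 2 else ε / 2) *
    if i ∈ T then (if b then -1 else 1) else 1]
  have h_coord : ∀ i, (if ω i = false then 1 - ε / 2 else ε / 2) *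
        (if i ∈ T then (if false then -1 else 1) else 1)
      + (if ω i = true then 1 - ε / 2 else ε / 2) * (if i ∈ T then (if true then -1 else 1) else 1)
      = if i ∈ T then (1 - ε) * (if ω i then -1 else 1) else 1 := fun i => by
    by_cases hi : i ∈ T <;> cases ω i <;> simp [hi] <;> ring
  rw [prod_congr rfl fun i _ => h_coord i]
  simp only [prod_ite_mem, univ_inter, prod_mul_distrib, prod_const]

theorem sum_noiseKernel_mul_apply (ε : ℝ) (g : (Fin n → Bool) → ℝ) (ω : Fin n → Bool) :
    ∑ ω', noiseKernel ε ω ω' * g ω' = ∑ S, (1 - ε) ^ #S * walshCoeff g S * walsh S ω := by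
  simp only [← sum_walshCoeff_mul_walsh g, mul_sum]
  rw [sum_comm]
  refine sum_congr rfl fun S _ => ?_
  simp only [mul_left_comm _ (walshCoeff g S), ← mul_sum, sum_noiseKernel_mul_walsh]
  ring

theorem noiseE_eq_sum_walshCoeff_mul (ε : ℝ) (f g : (Fin n → Bool) → ℝ) :
    noiseE ε f g = ∑ S, walshCoeff f S * walshCoeff g S * (1 - ε) ^ #S := by
  have h_inner : ∀ ω, ∑ ω', noiseKernel ε ω ω' * f ω * g ω'
      = ∑ S, (1 - ε) ^ #S * walshCoeff g S * (f ω * walsh S ω) := fun ω => by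
    simp only [mul_right_comm _ (f ω)]
    rw [← sum_mul, sum_noiseKernel_mul_apply, sum_mul]
    exact sum_congr rfl fun S _ => by ring
  simp only [noiseE, h_inner]
  rw [sum_comm]
  simp only [← mul_sum, sum_mul_walsh_eq_two_pow_mul_walshCoeff, sum_div]
  refine sum_congr rfl fun S _ => ?_
  field_simp

end BooleanCube

/-- E[f(ω)f(ω_ε)] ≥ (1-ε)^{I(f)} (Jensen applied to the spectral sample). -/
theorem noise_correlation_ge_rpow_influence {n : ℕ} (f : (Fin n → Bool) → ℝ)
    (hb : ∀ ω, f ω = 1 ∨ f ω = -1) (ε : ℝ) (hε : ε ∈ Set.Icc (0:ℝ) 1) :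
    (1 - ε) ^ (totalInfluence f) ≤ noiseE ε f f := by
  rw [BooleanCube.noiseE_eq_sum_walshCoeff_mul,
    BooleanCube.totalInfluence_eq_sum_sq_walshCoeff_mul_card hb]
  calc (1 - ε) ^ (∑ S, walshCoeff f S ^ 2 * (#S : ℝ))
      ≤ ∑ S, walshCoeff f S ^ 2 * (1 - ε) ^ (#S : ℝ) :=
        Real.rpow_sum_mul_le_sum_mul_rpow _ (sub_nonneg.2 hε.2) (fun S _ => sq_nonneg _)
          (BooleanCube.sum_sq_walshCoeff_of_sign hb) fun S _ => Nat.cast_nonneg _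
    _ = ∑ S, walshCoeff f S * walshCoeff f S * (1 - ε) ^ #S := by
        simp only [Real.rpow_natCast, sq]
end

section
/- Let f_n: {0,1}^{m_n} → {-1,1} be a sequence with I(f_n) ≤ C n^ρ for all n and some constants C, ρ > 0. If α > ρ and ε_n = n^{-α}, then E[f_n(ω)f_n(ω_{ε_n})] → 1 as n → ∞ (and consequently P(f_n(ω) ≠ f_n(ω_{ε_n})) → 0). -/
/-! Hybrid argument. Pass from `ω` to its noisy copy `ω'` one coordinate at a time. If
`f ω ≠ f ω'`, some step `k` changes the value of `f`; this requires coordinate `k` to be flipped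
(probability `ε / 2` under `noiseKernel ε`), at a hybrid configuration that is again uniform and
independent of that flip. Summing over `k` gives `P(f(ω) ≠ f(ω_ε)) ≤ (ε / 2) I(f)`. For `±1`-valued
`f`, `E[f(ω) f(ω_ε)] = 1 - 2 P(f(ω) ≠ f(ω_ε))`, and with `ε_n = n^(-α)` the bound is
`O(n^(ρ - α)) → 0`. -/

open Finset

section Expect

variable {n : ℕ}

lemma expect_mono {f g : (Fin n → Bool) → ℝ} (h : ∀ ω, f ω ≤ g ω) : expect f ≤ expect g :=
  div_le_div_of_nonneg_right (sum_le_sum fun ω _ => h ω) (by positivity)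

lemma expect_sum {ι : Type*} (s : Finset ι) (F : ι → (Fin n → Bool) → ℝ) :
    expect (fun ω => ∑ i ∈ s, F i ω) = ∑ i ∈ s, expect (F i) := by
  simp only [_root_.expect, sum_comm (s := s), sum_div]

lemma expect_const_mul_sub (a b : ℝ) (f : (Fin n → Bool) → ℝ) :
    expect (fun ω => a - b * f ω) = a - b * expect f := by
  simp only [_root_.expect, sum_sub_distrib, ← mul_sum, sum_const, card_univ, Fintype.card_fun,
    Fintype.card_bool, Fintype.card_fin, nsmul_eq_mul]
  push_cast
  field_simp

end Expect

section NoiseKernel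

variable {n : ℕ}

lemma noiseKernel_nonneg {ε : ℝ} (hε0 : 0 ≤ ε) (hε2 : ε ≤ 2) (ω ω' : Fin n → Bool) :
    0 ≤ noiseKernel ε ω ω' :=
  prod_nonneg fun i _ => by split_ifs <;> linarith

lemma sum_noiseKernel_mul_prod (ε : ℝ) (ω : Fin n → Bool) (g : Fin n → Bool → ℝ) :
    ∑ ω', noiseKernel ε ω ω' * ∏ i, g i (ω' i)
      = ∏ i, ((1 - ε / 2) * g i (ω i) + ε / 2 * g i (!ω i)) := by
  simp only [noiseKernel, ← prod_mul_distrib]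
  rw [← Fintype.prod_sum fun i b => (if ω i = b then 1 - ε / 2 else ε / 2) * g i b]
  refine prod_congr rfl fun i _ => ?_
  cases ω i <;> simp [add_comm]

lemma sum_noiseKernel (ε : ℝ) (ω : Fin n → Bool) : ∑ ω', noiseKernel ε ω ω' = 1 := by
  simpa using sum_noiseKernel_mul_prod ε ω (fun _ _ => 1)

lemma sum_noiseKernel_mul_apply (ε : ℝ) (ω : Fin n → Bool) (k : Fin n) (h : Bool → ℝ) :
    ∑ ω', noiseKernel ε ω ω' * h (ω' k) = (1 - ε / 2) * h (ω k) + ε / 2 * h (!ω k) := by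
  have := sum_noiseKernel_mul_prod ε ω (fun i b => if i = k then h b else 1)
  simp only [prod_ite_eq', mem_univ, if_true] at this
  rw [this, Fintype.prod_eq_single k fun i hi => by simp [hi]]
  simp

end NoiseKernel

lemma ite_eq_le_sum_range {α : Type*} [DecidableEq α] (g : ℕ → α) (N : ℕ) :
    (if g 0 = g N then (0 : ℝ) else 1) ≤ ∑ k ∈ range N, if g k = g (k + 1) then 0 else 1 := by
  induction N with
  | zero => simp
  | succ N ih =>
    rw [sum_range_succ]
    refine le_trans ?_ (add_le_add_left ih _)
    split_ifs <;> simp_all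

section Hybrid

variable {n : ℕ}

def hybrid (k : ℕ) (ω ω' : Fin n → Bool) : Fin n → Bool :=
  fun i => if (i : ℕ) < k then ω' i else ω i

lemma hybrid_zero (ω ω' : Fin n → Bool) : hybrid 0 ω ω' = ω := by
  funext i; simp [hybrid]

lemma hybrid_of_le {k : ℕ} (hk : n ≤ k) (ω ω' : Fin n → Bool) : hybrid k ω ω' = ω' := by
  funext i; simp [hybrid, i.isLt.trans_le hk]

lemma hybrid_succ (k : Fin n) (ω ω' : Fin n → Bool) :
    hybrid (k + 1) ω ω' = Function.update (hybrid k ω ω') k (ω' k) := by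
  funext i
  rcases eq_or_ne i k with rfl | hik
  · simp [hybrid]
  · have : (i : ℕ) ≠ k := Fin.val_ne_of_ne hik
    simp only [hybrid, Function.update_of_ne hik, Nat.lt_succ_iff_lt_or_eq, this, or_false]

lemma hybrid_apply_self (k : Fin n) (ω ω' : Fin n → Bool) : hybrid k ω ω' k = ω k := by
  simp [hybrid]

lemma hybrid_hybrid (k : ℕ) (ω ω' : Fin n → Bool) :
    hybrid k (hybrid k ω ω') (hybrid k ω' ω) = ω := by
  funext i; by_cases h : (i : ℕ) < k <;> simp [hybrid, h]

lemma noiseKernel_hybrid (ε : ℝ) (k : ℕ) (ω ω' : Fin n → Bool) :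
    noiseKernel ε (hybrid k ω ω') (hybrid k ω' ω) = noiseKernel ε ω ω' := by
  refine prod_congr rfl fun i _ => ?_
  by_cases h : (i : ℕ) < k <;> simp [hybrid, h, eq_comm]

-- Swapping the first `k` coordinates of `ω` and `ω'` is an involution preserving the kernel.
lemma sum_sum_noiseKernel_mul_hybrid (ε : ℝ) (k : ℕ) (G : (Fin n → Bool) → (Fin n → Bool) → ℝ) :
    ∑ ω, ∑ ω', noiseKernel ε ω ω' * G (hybrid k ω ω') (hybrid k ω' ω)
      = ∑ ω, ∑ ω', noiseKernel ε ω ω' * G ω ω' := by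
  let e := Function.Involutive.toPerm (fun p : (Fin n → Bool) × (Fin n → Bool) =>
    (hybrid k p.1 p.2, hybrid k p.2 p.1)) fun p => by simp [hybrid_hybrid]
  simp only [← Fintype.sum_prod_type']
  exact Fintype.sum_equiv e _ _ fun p => congrArg (· * _) (noiseKernel_hybrid ε k p.1 p.2).symm

end Hybrid

section Influence

variable {n : ℕ}

lemma ite_eq_le_sum_hybrid (f : (Fin n → Bool) → ℝ) (ω ω' : Fin n → Bool) :
    (if f ω = f ω' then (0 : ℝ) else 1)
      ≤ ∑ k : Fin n, if f (hybrid k ω ω') = f (hybrid (k + 1) ω ω') then 0 else 1 := by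
  have := ite_eq_le_sum_range (fun k => f (hybrid k ω ω')) n
  rwa [hybrid_zero, hybrid_of_le le_rfl, ← Fin.sum_univ_eq_sum_range] at this

/-- The `k`-th hybrid step changes `f` only if the noise flips coordinate `k` (probability `ε / 2`),
and the hybrid configuration before that step is itself uniform. -/
lemma expect_sum_noiseKernel_mul_hybrid_ne (ε : ℝ) (f : (Fin n → Bool) → ℝ) (k : Fin n) :
    expect (fun ω => ∑ ω', noiseKernel ε ω ω' *
        if f (hybrid k ω ω') = f (hybrid (k + 1) ω ω') then 0 else 1)
      = ε / 2 * influence f k := by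
  have flip_step : ∀ y : Fin n → Bool,
      ∑ ω', noiseKernel ε y ω' * (if f y = f (Function.update y k (ω' k)) then 0 else 1)
        = ε / 2 * if f y = f (Function.update y k (!y k)) then 0 else 1 := by
    intro y
    rw [sum_noiseKernel_mul_apply ε y k fun b => if f y = f (Function.update y k b) then 0 else 1]
    simp
  rw [influence, _root_.expect, _root_.expect, mul_div_assoc', mul_sum]
  congr 1
  simp only [hybrid_succ]
  rw [← sum_congr rfl fun y _ => flip_step y]
  conv_lhs => enter [2, ω, 2, ω', 2]; rw [← hybrid_apply_self k ω' ω]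
  exact sum_sum_noiseKernel_mul_hybrid ε k
    fun y z => if f y = f (Function.update y k (z k)) then 0 else 1

theorem noiseP_le_mul_totalInfluence {ε : ℝ} (hε0 : 0 ≤ ε) (hε2 : ε ≤ 2)
    (f : (Fin n → Bool) → ℝ) : noiseP ε f ≤ ε / 2 * totalInfluence f :=
  calc noiseP ε f = expect fun ω => ∑ ω', noiseKernel ε ω ω' * if f ω = f ω' then 0 else 1 := rfl
    _ ≤ expect fun ω => ∑ k : Fin n, ∑ ω', noiseKernel ε ω ω' *
          if f (hybrid k ω ω') = f (hybrid (k + 1) ω ω') then 0 else 1 :=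
        expect_mono fun ω => by
          rw [sum_comm]
          simp only [← mul_sum]
          exact sum_le_sum fun ω' _ => mul_le_mul_of_nonneg_left
            (ite_eq_le_sum_hybrid f ω ω') (noiseKernel_nonneg hε0 hε2 ω ω')
    _ = ε / 2 * totalInfluence f := by
        rw [expect_sum, totalInfluence, mul_sum]
        exact sum_congr rfl fun k _ => expect_sum_noiseKernel_mul_hybrid_ne ε f k

lemma noiseP_nonneg {ε : ℝ} (hε0 : 0 ≤ ε) (hε2 : ε ≤ 2) (f : (Fin n → Bool) → ℝ) :
    0 ≤ noiseP ε f :=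
  div_nonneg (sum_nonneg fun ω _ => sum_nonneg fun ω' _ =>
    mul_nonneg (noiseKernel_nonneg hε0 hε2 ω ω') (by positivity)) (by positivity)

lemma noiseE_self_eq_one_sub_two_mul_noiseP (ε : ℝ) {f : (Fin n → Bool) → ℝ}
    (hf : ∀ ω, f ω = 1 ∨ f ω = -1) : noiseE ε f f = 1 - 2 * noiseP ε f := by
  have sign_mul : ∀ ω ω', f ω * f ω' = 1 - 2 * if f ω = f ω' then 0 else 1 := by
    intro ω ω'
    rcases hf ω with h | h <;> rcases hf ω' with h' | h' <;> norm_num [h, h']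
  calc noiseE ε f f = expect fun ω => ∑ ω', noiseKernel ε ω ω' * (f ω * f ω') := by
        simp only [noiseE, _root_.expect, mul_assoc]
    _ = expect fun ω => 1 - 2 * ∑ ω', noiseKernel ε ω ω' * if f ω = f ω' then 0 else 1 := by
        simp only [sign_mul, mul_sub, mul_one, sum_sub_distrib, sum_noiseKernel, mul_sum,
          mul_left_comm]
    _ = 1 - 2 * noiseP ε f := expect_const_mul_sub 1 2 _

end Influence

lemma tendsto_rpow_neg_mul_rpow_atTop {ρ α : ℝ} (hα : ρ < α) :
    Filter.Tendsto (fun x : ℝ => x ^ (-α) * x ^ ρ) Filter.atTop (nhds 0) := by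
  have hlim := tendsto_rpow_neg_atTop (sub_pos.mpr hα)
  refine hlim.congr' ?_
  filter_upwards [Filter.eventually_gt_atTop 0] with x hx
  rw [← Real.rpow_add hx, neg_sub, sub_eq_neg_add]

theorem influence_noise_stability_bound_general
    {m : ℕ → ℕ} (f : ∀ n, (Fin (m n) → Bool) → ℝ)
    (hb : ∀ n ω, f n ω = 1 ∨ f n ω = -1)
    (C ρ : ℝ) (hρ : 0 < ρ)
    (hI : ∀ n : ℕ, totalInfluence (f n) ≤ C * (n : ℝ) ^ ρ)
    (α : ℝ) (hα : ρ < α) :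
    Filter.Tendsto (fun n : ℕ => noiseE ((n : ℝ) ^ (-α)) (f n) (f n))
      Filter.atTop (nhds 1) ∧
    Filter.Tendsto (fun n : ℕ => noiseP ((n : ℝ) ^ (-α)) (f n))
      Filter.atTop (nhds 0) := by
  have hε : ∀ᶠ n : ℕ in Filter.atTop, 0 ≤ (n : ℝ) ^ (-α) ∧ (n : ℝ) ^ (-α) ≤ 2 := by
    filter_upwards [Filter.eventually_ge_atTop 1] with n hn
    have hle := Real.rpow_le_one_of_one_le_of_nonpos (Nat.one_le_cast.mpr hn)
      (neg_nonpos.mpr (hρ.trans hα).le)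
    exact ⟨Real.rpow_nonneg n.cast_nonneg _, by linarith⟩
  have hbound : Filter.Tendsto (fun n : ℕ => (n : ℝ) ^ (-α) / 2 * (C * (n : ℝ) ^ ρ))
      Filter.atTop (nhds 0) := by
    have := ((tendsto_rpow_neg_mul_rpow_atTop hα).comp tendsto_natCast_atTop_atTop).const_mul (C / 2)
    simpa [Function.comp_def, mul_comm, mul_left_comm, mul_assoc, div_eq_mul_inv] using this
  have hP : Filter.Tendsto (fun n : ℕ => noiseP ((n : ℝ) ^ (-α)) (f n)) Filter.atTop (nhds 0) :=
    squeeze_zero' (hε.mono fun n h => noiseP_nonneg h.1 h.2 (f n))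
      (hε.mono fun n h => (noiseP_le_mul_totalInfluence h.1 h.2 (f n)).trans
        (mul_le_mul_of_nonneg_left (hI n) (by linarith)))
      hbound
  refine ⟨?_, hP⟩
  simpa [noiseE_self_eq_one_sub_two_mul_noiseP _ (hb _)] using (hP.const_mul 2).const_sub 1

/-- If I(f_n) ≤ C n^ρ and α > ρ, then with ε_n = n^{-α} the noise correlation
tends to 1 and P(f_n(ω) ≠ f_n(ω_{ε_n})) → 0 (so STAB({f_n}) ≤ ρ). -/
theorem influence_noise_stability_bound
    {m : ℕ → ℕ} (f : ∀ n, (Fin (m n) → Bool) → ℝ)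
    (hb : ∀ n ω, f n ω = 1 ∨ f n ω = -1)
    (C ρ : ℝ) (hC : 0 < C) (hρ : 0 < ρ)
    (hI : ∀ n : ℕ, totalInfluence (f n) ≤ C * (n : ℝ) ^ ρ)
    (α : ℝ) (hα : ρ < α) :
    Filter.Tendsto (fun n : ℕ => noiseE ((n : ℝ) ^ (-α)) (f n) (f n))
      Filter.atTop (nhds 1) ∧
    Filter.Tendsto (fun n : ℕ => noiseP ((n : ℝ) ^ (-α)) (f n))
      Filter.atTop (nhds 0) :=
  influence_noise_stability_bound_general f hb C ρ hρ hI α hα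
end

section
/- Let T be a spherically symmetric rooted tree with T_n vertices at level n, and let percolation with parameter p be performed on T (each edge open independently with probability p). Setting w_n = p^n T_n, if Σ_n 1/w_n < ∞ then the root is connected to infinity with positive probability. -/
/-!
Second moment method. Let `A v` be the event that every edge on the path from the root to the
level-`n` vertex `v` is open and `Z n = ∑ v, 𝟙 (A v)`, so that `E[Z n] = w n`. Two such paths
sharing exactly `k` edges are both open with probability `p ^ (2 n - k)`, and a given vertex
shares at least `k` edges with `T n / T k` vertices, whence
`E[Z n ^ 2] ≤ w n ^ 2 ∑_{k ≤ n} 1 / w k`.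
By Cauchy–Schwarz, `P(Z n > 0) ≥ E[Z n] ^ 2 / E[Z n ^ 2] ≥ (∑_k 1 / w k)⁻¹`. The events
`Z n > 0` decrease in `n`, and on their intersection an open ray exists by compactness of the
space of rays (Kőnig's lemma).
-/

open MeasureTheory ProbabilityTheory Finset
open scoped ENNReal

section SecondMoment

variable {Ω : Type*} [MeasurableSpace Ω] (μ : Measure Ω)

theorem sq_lintegral_le_lintegral_sq_mul_measure {Z : Ω → ℝ≥0∞} (hZ : Measurable Z)
    {S : Set Ω} (hS : MeasurableSet S) (hZS : ∀ ω ∉ S, Z ω = 0) :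
    (∫⁻ ω, Z ω ∂μ) ^ 2 ≤ (∫⁻ ω, Z ω ^ 2 ∂μ) * μ S := by
  have hZ_restrict : ∫⁻ ω, Z ω ∂μ = ∫⁻ ω in S, Z ω ∂μ := by
    rw [← lintegral_indicator hS]
    refine lintegral_congr fun ω => ?_
    by_cases hω : ω ∈ S <;> simp [hω, hZS]
  have holder := ENNReal.lintegral_mul_le_Lp_mul_Lq (μ.restrict S) Real.HolderConjugate.two_two
    hZ.aemeasurable (aemeasurable_const (b := 1))
  simp only [Pi.mul_apply, mul_one, ENNReal.rpow_two, one_pow, lintegral_const,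
    Measure.restrict_apply_univ, one_mul] at holder
  calc (∫⁻ ω, Z ω ∂μ) ^ 2
      ≤ ((∫⁻ ω in S, Z ω ^ 2 ∂μ) ^ (1 / 2 : ℝ) * μ S ^ (1 / 2 : ℝ)) ^ 2 := by
        rw [hZ_restrict]; gcongr
    _ = (∫⁻ ω in S, Z ω ^ 2 ∂μ) * μ S := by
        rw [mul_pow, ← ENNReal.rpow_two, ← ENNReal.rpow_two, ← ENNReal.rpow_mul,
          ← ENNReal.rpow_mul]
        norm_num
    _ ≤ (∫⁻ ω, Z ω ^ 2 ∂μ) * μ S := by gcongr; exact Measure.restrict_le_self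

theorem sq_sum_measure_le_sum_measure_inter_mul_measure_biUnion {ι : Type*} (s : Finset ι)
    {A : ι → Set Ω} (hA : ∀ i, MeasurableSet (A i)) :
    (∑ i ∈ s, μ (A i)) ^ 2 ≤ (∑ i ∈ s, ∑ j ∈ s, μ (A i ∩ A j)) * μ (⋃ i ∈ s, A i) := by
  set Z : Ω → ℝ≥0∞ := fun ω => ∑ i ∈ s, (A i).indicator 1 ω
  have hZ : Measurable Z := Finset.measurable_sum _ fun i _ => measurable_one.indicator (hA i)
  have hZ_lintegral : ∫⁻ ω, Z ω ∂μ = ∑ i ∈ s, μ (A i) := by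
    rw [lintegral_finsetSum _ fun i _ => measurable_one.indicator (hA i)]
    exact sum_congr rfl fun i _ => lintegral_indicator_one (hA i)
  have hZ_sq_lintegral : ∫⁻ ω, Z ω ^ 2 ∂μ = ∑ i ∈ s, ∑ j ∈ s, μ (A i ∩ A j) := by
    have hZ_sq : ∀ ω, Z ω ^ 2 = ∑ i ∈ s, ∑ j ∈ s, (A i ∩ A j).indicator 1 ω := fun ω => by
      simp only [Z, sq, sum_mul_sum, Set.inter_indicator_one, Pi.mul_apply]
    simp_rw [hZ_sq]
    rw [lintegral_finsetSum _ fun i _ => Finset.measurable_sum _ fun j _ =>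
      measurable_one.indicator ((hA i).inter (hA j))]
    refine sum_congr rfl fun i _ => ?_
    rw [lintegral_finsetSum _ fun j _ => measurable_one.indicator ((hA i).inter (hA j))]
    exact sum_congr rfl fun j _ => lintegral_indicator_one ((hA i).inter (hA j))
  have hZ_support : ∀ ω ∉ ⋃ i ∈ s, A i, Z ω = 0 := fun ω hω =>
    sum_eq_zero fun i hi => Set.indicator_of_notMem (fun hωi => hω (Set.mem_biUnion hi hωi)) _
  simpa only [hZ_lintegral, hZ_sq_lintegral] using
    sq_lintegral_le_lintegral_sq_mul_measure μ hZ (s.measurableSet_biUnion fun i _ => hA i)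
      hZ_support

theorem sq_sum_measureReal_le_sum_measureReal_inter_mul_measureReal_biUnion [IsFiniteMeasure μ]
    {ι : Type*} (s : Finset ι) {A : ι → Set Ω} (hA : ∀ i, MeasurableSet (A i)) :
    (∑ i ∈ s, μ.real (A i)) ^ 2
      ≤ (∑ i ∈ s, ∑ j ∈ s, μ.real (A i ∩ A j)) * μ.real (⋃ i ∈ s, A i) := by
  have h := ENNReal.toReal_mono (by simp [ENNReal.mul_eq_top, ENNReal.sum_eq_top])
    (sq_sum_measure_le_sum_measure_inter_mul_measure_biUnion μ s hA)
  simpa [measureReal_def, ENNReal.toReal_sum, ENNReal.sum_eq_top] using h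

theorem measureReal_biInter_eq_pow {ι : Type*} {X : ι → Ω → Bool} (hindep : iIndepFun X μ)
    {p : ℝ} (hp : 0 ≤ p) (hmarg : ∀ i, μ {ω | X i ω = true} = ENNReal.ofReal p)
    (s : Finset ι) : μ.real (⋂ i ∈ s, {ω | X i ω = true}) = p ^ #s := by
  change μ.real (⋂ i ∈ s, X i ⁻¹' {true}) = _
  rw [measureReal_def, hindep.meas_biInter fun i _ => ⟨{true}, trivial, rfl⟩]
  simp_rw [Set.preimage, Set.mem_singleton_iff, hmarg, prod_const, ENNReal.toReal_pow,
    ENNReal.toReal_ofReal hp]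

end SecondMoment

namespace SphericallySymmetricTree

variable (a : ℕ → ℕ)

abbrev Vertex (n : ℕ) := ∀ i : Fin n, Fin (a i)

abbrev Edge := Σ n : ℕ, Vertex a (n + 1)

abbrev Ray := (m : ℕ) → Fin (a m)

-- the edge into the ancestor of `v` at level `m + 1`
def pathEdge {n : ℕ} (v : Vertex a n) (m : Fin n) : Edge a :=
  ⟨m, fun i => v (Fin.castLE m.isLt i)⟩

def pathEdges {n : ℕ} (v : Vertex a n) : Finset (Edge a) := univ.image (pathEdge a v)

def commonPrefix {n : ℕ} (u v : Vertex a n) : Finset (Fin n) :=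
  univ.filter fun m => ∀ i ≤ m, u i = v i

variable {a}

theorem pathEdge_eq_pathEdge_iff {n : ℕ} {u v : Vertex a n} {m m' : Fin n} :
    pathEdge a u m = pathEdge a v m' ↔ m = m' ∧ ∀ i ≤ m, u i = v i := by
  constructor
  · intro h
    obtain rfl : m = m' := Fin.ext (congrArg Sigma.fst h)
    refine ⟨rfl, fun i hi => ?_⟩
    exact congrFun (eq_of_heq (Sigma.mk.inj h).2) ⟨i, Nat.lt_succ_of_le hi⟩
  · rintro ⟨rfl, h⟩
    exact Sigma.ext rfl (heq_of_eq (funext fun i => h _ (Nat.lt_succ_iff.mp i.isLt)))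

theorem pathEdge_injective {n : ℕ} (v : Vertex a n) : Function.Injective (pathEdge a v) :=
  fun _ _ h => (pathEdge_eq_pathEdge_iff.mp h).1

theorem card_pathEdges {n : ℕ} (v : Vertex a n) : #(pathEdges a v) = n := by
  rw [pathEdges, card_image_of_injective _ (pathEdge_injective v), card_univ, Fintype.card_fin]

theorem pathEdges_inter_pathEdges {n : ℕ} (u v : Vertex a n) :
    pathEdges a u ∩ pathEdges a v = (commonPrefix a u v).image (pathEdge a u) := by
  ext e
  simp only [pathEdges, commonPrefix, mem_inter, mem_image, mem_univ, true_and, mem_filter]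
  constructor
  · rintro ⟨⟨m, rfl⟩, ⟨m', hm'⟩⟩
    obtain ⟨rfl, h⟩ := pathEdge_eq_pathEdge_iff.mp hm'
    exact ⟨m', fun i hi => (h i hi).symm, rfl⟩
  · rintro ⟨m, h, rfl⟩
    exact ⟨⟨m, rfl⟩, m, (pathEdge_eq_pathEdge_iff.mpr ⟨rfl, h⟩).symm⟩

theorem card_pathEdges_union {n : ℕ} (u v : Vertex a n) :
    #(pathEdges a u ∪ pathEdges a v) = 2 * n - #(commonPrefix a u v) := by
  have h := card_union_add_card_inter (pathEdges a u) (pathEdges a v)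
  rw [pathEdges_inter_pathEdges, card_image_of_injective _ (pathEdge_injective u),
    card_pathEdges, card_pathEdges] at h
  omega

theorem card_commonPrefix_le {n : ℕ} (u v : Vertex a n) : #(commonPrefix a u v) ≤ n :=
  (card_le_univ _).trans_eq (Fintype.card_fin n)

theorem eq_of_lt_card_commonPrefix {n : ℕ} {u v : Vertex a n} {i : Fin n}
    (hi : i < #(commonPrefix a u v)) : u i = v i := by
  by_contra hne
  have hsub : commonPrefix a u v ⊆ Iio i := fun m hm =>
    mem_Iio.mpr (lt_of_not_ge fun him => hne ((mem_filter.mp hm).2 i him))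
  have := (card_le_card hsub).trans_eq (Fin.card_Iio i)
  omega

theorem card_filter_forall_lt_eq {n : ℕ} (u : Vertex a n) {k : ℕ} (hk : k ≤ n) :
    #(univ.filter fun v : Vertex a n => ∀ i : Fin n, (i : ℕ) < k → v i = u i)
      = ∏ i ∈ Ico k n, a i := by
  have hpi : (univ.filter fun v : Vertex a n => ∀ i : Fin n, (i : ℕ) < k → v i = u i)
      = Fintype.piFinset fun i : Fin n => if (i : ℕ) < k then {u i} else univ := by
    ext v
    simp only [mem_filter, mem_univ, true_and, Fintype.mem_piFinset]
    refine forall_congr' fun i => ?_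
    split_ifs <;> simp [*]
  rw [hpi, Fintype.card_piFinset]
  simp only [apply_ite card, card_singleton, card_univ, Fintype.card_fin]
  rw [Fin.prod_univ_eq_prod_range (fun i => if i < k then 1 else a i),
    ← prod_range_mul_prod_Ico _ hk, prod_eq_one fun i hi => if_pos (mem_range.mp hi), one_mul]
  exact prod_congr rfl fun i hi => if_neg (mem_Ico.mp hi).1.not_gt

theorem sum_pow_card_pathEdges_union_le {n : ℕ} (u : Vertex a n) {q : ℝ} (hq : 0 ≤ q) :
    ∑ v : Vertex a n, q ^ #(pathEdges a u ∪ pathEdges a v)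
      ≤ ∑ k ∈ range (n + 1), q ^ (2 * n - k) * ∏ i ∈ Ico k n, (a i : ℝ) := by
  simp_rw [card_pathEdges_union]
  rw [← sum_fiberwise_of_maps_to (g := fun v => #(commonPrefix a u v)) (t := range (n + 1))
    fun v _ => mem_range.mpr (Nat.lt_succ_of_le (card_commonPrefix_le u v))]
  refine sum_le_sum fun k hk => ?_
  have hsub : (univ.filter fun v => #(commonPrefix a u v) = k)
      ⊆ univ.filter fun v : Vertex a n => ∀ i : Fin n, (i : ℕ) < k → v i = u i :=
    fun v hv => mem_filter.mpr ⟨mem_univ v, fun i hi =>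
      (eq_of_lt_card_commonPrefix (((mem_filter.mp hv).2).symm ▸ hi)).symm⟩
  calc ∑ v ∈ univ.filter (fun v => #(commonPrefix a u v) = k), q ^ (2 * n - #(commonPrefix a u v))
      = #(univ.filter fun v => #(commonPrefix a u v) = k) * q ^ (2 * n - k) := by
        rw [sum_congr rfl fun v hv => by rw [(mem_filter.mp hv).2], sum_const, nsmul_eq_mul]
    _ ≤ #(univ.filter fun v : Vertex a n => ∀ i : Fin n, (i : ℕ) < k → v i = u i)
          * q ^ (2 * n - k) := by
        gcongr
    _ = q ^ (2 * n - k) * ∏ i ∈ Ico k n, (a i : ℝ) := by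
        rw [card_filter_forall_lt_eq u (Nat.lt_succ_iff.mp (mem_range.mp hk)), mul_comm]
        push_cast
        rfl

theorem card_vertex (n : ℕ) : Fintype.card (Vertex a n) = ∏ i ∈ range n, a i := by
  rw [Fintype.card_pi, ← Fin.prod_univ_eq_prod_range]
  simp only [Fintype.card_fin]

variable (a) in
def weight (p : ℝ) (n : ℕ) : ℝ := p ^ n * ∏ i ∈ range n, (a i : ℝ)

theorem weight_pos (ha : ∀ n, 0 < a n) {p : ℝ} (hp : 0 < p) (n : ℕ) : 0 < weight a p n :=
  mul_pos (pow_pos hp n) (prod_pos fun i _ => Nat.cast_pos.mpr (ha i))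

theorem pow_mul_prod_Ico_eq_div_weight {p : ℝ} {k n : ℕ} (hk : weight a p k ≠ 0) (hkn : k ≤ n) :
    p ^ (2 * n - k) * ∏ i ∈ Ico k n, (a i : ℝ) = p ^ n * weight a p n / weight a p k := by
  rw [eq_div_iff hk, weight, weight, ← prod_range_mul_prod_Ico _ hkn]
  obtain ⟨j, rfl⟩ := Nat.exists_eq_add_of_le hkn
  rw [show 2 * (k + j) - k = k + j + j by omega]
  ring

section Percolation

variable {Ω : Type*} (X : Edge a → Ω → Bool)

def openPath {n : ℕ} (v : Vertex a n) : Set Ω := ⋂ e ∈ pathEdges a v, {ω | X e ω = true}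

def reachesLevel (n : ℕ) : Set Ω := ⋃ v : Vertex a n, openPath X v

theorem openPath_subset_openPath_init {n : ℕ} (v : Vertex a (n + 1)) :
    openPath X v ⊆ openPath X (Fin.init v) := by
  refine Set.biInter_subset_biInter_left fun e he => ?_
  obtain ⟨m, -, rfl⟩ := mem_image.mp he
  exact mem_image.mpr ⟨m.castSucc, mem_univ _, rfl⟩

theorem antitone_reachesLevel : Antitone (reachesLevel X) :=
  antitone_nat_of_succ_le fun _ => Set.iUnion_subset fun v =>
    (openPath_subset_openPath_init X v).trans (Set.subset_iUnion _ (Fin.init v))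

def Ray.restrict (x : Ray a) (n : ℕ) : Vertex a n := fun i => x i

theorem Ray.restrict_surjective (ha : ∀ n, 0 < a n) (n : ℕ) :
    Function.Surjective fun x : Ray a => x.restrict n := fun v =>
  ⟨fun m => if h : m < n then v ⟨m, h⟩ else ⟨0, ha m⟩, funext fun i => dif_pos i.isLt⟩

theorem Ray.continuous_restrict (n : ℕ) : Continuous fun x : Ray a => x.restrict n :=
  continuous_pi fun i => continuous_apply (i : ℕ)

theorem exists_ray_of_forall_mem_reachesLevel (ha : ∀ n, 0 < a n) {ω : Ω}
    (h : ∀ n, ω ∈ reachesLevel X n) :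
    ∃ x : Ray a, ∀ n : ℕ, X ⟨n, fun i : Fin (n + 1) => x i.val⟩ ω = true := by
  let K : ℕ → Set (Ray a) := fun n => {x | ω ∈ openPath X (x.restrict n)}
  have hK_closed : ∀ n, IsClosed (K n) := fun n =>
    (isClosed_discrete {v : Vertex a n | ω ∈ openPath X v}).preimage (Ray.continuous_restrict n)
  have hK_anti : ∀ n, K (n + 1) ⊆ K n := fun n x hx =>
    openPath_subset_openPath_init X (x.restrict (n + 1)) hx
  have hK_nonempty : ∀ n, (K n).Nonempty := fun n => by
    obtain ⟨v, hv⟩ := Set.mem_iUnion.mp (h n)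
    obtain ⟨x, rfl⟩ := Ray.restrict_surjective ha n v
    exact ⟨x, hv⟩
  obtain ⟨x, hx⟩ := IsCompact.nonempty_iInter_of_sequence_nonempty_isCompact_isClosed K hK_anti
    hK_nonempty (hK_closed 0).isCompact hK_closed
  exact ⟨x, fun n => Set.mem_iInter₂.mp (Set.mem_iInter.mp hx (n + 1))
    (pathEdge a (x.restrict (n + 1)) (Fin.last n)) (mem_image_of_mem _ (mem_univ _))⟩

variable [MeasurableSpace Ω]

theorem measurableSet_openPath (hmeas : ∀ e, Measurable (X e)) {n : ℕ} (v : Vertex a n) :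
    MeasurableSet (openPath X v) :=
  Finset.measurableSet_biInter _ fun e _ => hmeas e (measurableSet_singleton true)

theorem measurableSet_reachesLevel (hmeas : ∀ e, Measurable (X e)) (n : ℕ) :
    MeasurableSet (reachesLevel X n) :=
  MeasurableSet.iUnion fun v => measurableSet_openPath X hmeas v

variable (μ : Measure Ω) {p : ℝ} (hindep : iIndepFun X μ)
  (hmarg : ∀ e, μ {ω | X e ω = true} = ENNReal.ofReal p)
include hindep hmarg

theorem measureReal_openPath (hp : 0 ≤ p) {n : ℕ} (v : Vertex a n) :
    μ.real (openPath X v) = p ^ n := by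
  rw [openPath, measureReal_biInter_eq_pow μ hindep hp hmarg, card_pathEdges]

theorem measureReal_openPath_inter (hp : 0 ≤ p) {n : ℕ} (u v : Vertex a n) :
    μ.real (openPath X u ∩ openPath X v) = p ^ #(pathEdges a u ∪ pathEdges a v) := by
  rw [openPath, openPath, ← set_biInter_inter, measureReal_biInter_eq_pow μ hindep hp hmarg]

theorem sum_measureReal_openPath (hp : 0 ≤ p) (n : ℕ) :
    ∑ v : Vertex a n, μ.real (openPath X v) = weight a p n := by
  simp_rw [measureReal_openPath X μ hindep hmarg hp]
  rw [sum_const, card_univ, card_vertex, nsmul_eq_mul, weight]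
  push_cast
  ring

theorem sum_sum_measureReal_openPath_inter_le (ha : ∀ n, 0 < a n) (hp : 0 < p) (n : ℕ) :
    ∑ u : Vertex a n, ∑ v : Vertex a n, μ.real (openPath X u ∩ openPath X v)
      ≤ weight a p n ^ 2 * ∑ k ∈ range (n + 1), 1 / weight a p k := by
  simp_rw [measureReal_openPath_inter X μ hindep hmarg hp.le]
  calc ∑ u : Vertex a n, ∑ v : Vertex a n, p ^ #(pathEdges a u ∪ pathEdges a v)
      ≤ ∑ _u : Vertex a n, ∑ k ∈ range (n + 1), p ^ n * weight a p n * (1 / weight a p k) :=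
        sum_le_sum fun u _ => (sum_pow_card_pathEdges_union_le u hp.le).trans_eq <|
          sum_congr rfl fun k hk => by
            rw [pow_mul_prod_Ico_eq_div_weight (weight_pos ha hp k).ne'
              (Nat.lt_succ_iff.mp (mem_range.mp hk)), mul_one_div]
    _ = weight a p n ^ 2 * ∑ k ∈ range (n + 1), 1 / weight a p k := by
        rw [sum_const, card_univ, card_vertex, nsmul_eq_mul, ← mul_sum]
        rw [show weight a p n = p ^ n * ∏ i ∈ range n, (a i : ℝ) from rfl]
        push_cast
        ring

theorem inv_sum_le_measureReal_reachesLevel [IsFiniteMeasure μ] (hmeas : ∀ e, Measurable (X e))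
    (ha : ∀ n, 0 < a n) (hp : 0 < p) (n : ℕ) :
    (∑ k ∈ range (n + 1), 1 / weight a p k)⁻¹ ≤ μ.real (reachesLevel X n) := by
  have hsecond := sq_sum_measureReal_le_sum_measureReal_inter_mul_measureReal_biUnion μ univ
    (measurableSet_openPath X hmeas (n := n))
  simp only [sum_measureReal_openPath X μ hindep hmarg hp.le, mem_univ, Set.iUnion_true]
    at hsecond
  have hw := pow_pos (weight_pos ha hp n) 2
  have hone : 1 ≤ (∑ k ∈ range (n + 1), 1 / weight a p k) * μ.real (reachesLevel X n) := by
    refine le_of_mul_le_mul_left ?_ hw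
    calc weight a p n ^ 2 * 1 ≤ _ := (mul_one _).trans_le hsecond
      _ ≤ _ := mul_le_mul_of_nonneg_right
          (sum_sum_measureReal_openPath_inter_le X μ hindep hmarg ha hp n) measureReal_nonneg
      _ = _ := mul_assoc _ _ _
  exact (inv_le_iff_one_le_mul₀' (sum_pos (fun k _ => one_div_pos.mpr (weight_pos ha hp k))
    nonempty_range_add_one)).mpr hone

theorem inv_tsum_le_measureReal_reachesLevel [IsFiniteMeasure μ]
    (hmeas : ∀ e, Measurable (X e)) (ha : ∀ n, 0 < a n) (hp : 0 < p)
    (hsum : Summable fun n => 1 / weight a p n) (n : ℕ) :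
    (∑' k, 1 / weight a p k)⁻¹ ≤ μ.real (reachesLevel X n) := by
  have hpos : ∀ k, 0 < 1 / weight a p k := fun k => one_div_pos.mpr (weight_pos ha hp k)
  exact (inv_anti₀ (sum_pos (fun k _ => hpos k) nonempty_range_add_one)
    (hsum.sum_le_tsum _ fun k _ => (hpos k).le)).trans
    (inv_sum_le_measureReal_reachesLevel X μ hindep hmarg hmeas ha hp n)

end Percolation

end SphericallySymmetricTree

open SphericallySymmetricTree

theorem lyons_spherically_symmetric_second_moment_general
    {Ω : Type*} [MeasurableSpace Ω] (μ : Measure Ω) [IsProbabilityMeasure μ]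
    (a : ℕ → ℕ) (ha : ∀ n, 1 ≤ a n) (p : ℝ) (hp0 : 0 < p)
    (X : (Σ n : ℕ, ∀ i : Fin (n + 1), Fin (a i.val)) → Ω → Bool)
    (hmeas : ∀ e, Measurable (X e))
    (hindep : iIndepFun X μ)
    (hmarg : ∀ e, μ {ω | X e ω = true} = ENNReal.ofReal p)
    (hsum : Summable fun n : ℕ =>
      1 / (p ^ n * ∏ i ∈ Finset.range n, (a i : ℝ))) :
    0 < μ {ω | ∃ x : (m : ℕ) → Fin (a m), ∀ n : ℕ,
        X ⟨n, fun i : Fin (n + 1) => x i.val⟩ ω = true} := by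
  set C := ∑' n, 1 / weight a p n
  have hC : 0 < C := hsum.tsum_pos (fun n => (one_div_pos.mpr (weight_pos ha hp0 n)).le) 0
    (one_div_pos.mpr (weight_pos ha hp0 0))
  have hlevel : ∀ n, ENNReal.ofReal C⁻¹ ≤ μ (reachesLevel X n) := fun n =>
    ENNReal.ofReal_le_of_le_toReal
      (inv_tsum_le_measureReal_reachesLevel X μ hindep hmarg hmeas ha hp0 hsum n)
  calc 0 < ENNReal.ofReal C⁻¹ := ENNReal.ofReal_pos.mpr (inv_pos.mpr hC)
    _ ≤ μ (⋂ n, reachesLevel X n) := by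
        rw [(antitone_reachesLevel X).measure_iInter
          (fun n => (measurableSet_reachesLevel X hmeas n).nullMeasurableSet)
          ⟨0, measure_ne_top μ _⟩]
        exact le_iInf hlevel
    _ ≤ _ := measure_mono fun ω hω =>
        exists_ray_of_forall_mem_reachesLevel X ha (Set.mem_iInter.mp hω)

/-- **Lyons' theorem ('if' direction) for spherically symmetric trees.**
The spherically symmetric rooted tree with branching numbers `a` has, as its
level-`n` vertices, the functions `∀ i : Fin n, Fin (a i)`; its edges are
indexed by the vertices of level `n + 1` (the edge joining such a vertex to
its parent).  Percolation is given by independent `{true, false}`-valued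
random variables `X e`, one for each edge `e`, with `P(X e = true) = p`.
Setting `w n = pⁿ · T_n` with `T_n = ∏_{i<n} a i` the number of level-`n`
vertices, if `Σ_n 1 / w n < ∞` then with positive probability the root is
connected to infinity, i.e. there is an infinite ray all of whose edges are
open. -/
theorem lyons_spherically_symmetric_second_moment
    {Ω : Type*} [MeasurableSpace Ω] (μ : Measure Ω) [IsProbabilityMeasure μ]
    (a : ℕ → ℕ) (ha : ∀ n, 1 ≤ a n) (p : ℝ) (hp0 : 0 < p) (hp1 : p ≤ 1)
    (X : (Σ n : ℕ, ∀ i : Fin (n + 1), Fin (a i.val)) → Ω → Bool)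
    (hmeas : ∀ e, Measurable (X e))
    (hindep : iIndepFun X μ)
    (hmarg : ∀ e, μ {ω | X e ω = true} = ENNReal.ofReal p)
    (hsum : Summable fun n : ℕ =>
      1 / (p ^ n * ∏ i ∈ Finset.range n, (a i : ℝ))) :
    0 < μ {ω | ∃ x : (m : ℕ) → Fin (a m), ∀ n : ℕ,
        X ⟨n, fun i : Fin (n + 1) => x i.val⟩ ω = true} :=
  lyons_spherically_symmetric_second_moment_general μ a ha p hp0 X hmeas hindep hmarg hsum
end
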